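/- For every n ∈ ℕ and all z: z · P_n(z; α, β) = P_{n+1}(z; α, β) + (d_n − b_n) · P_n(z; α−1, β+1). -/

import Mathlib

/-!
Compare coefficients of `z ^ (k + 1)`. Writing `c_{n,k}(α, β)` for the `k`-th coefficient of
`P_n(z; α, β)`, both `c_{n+1,k+1}(α, β)` and `c_{n,k+1}(α-1, β+1)` are `c_{n,k}(α, β)` times the
rational factors `(n+1)(α+1+k) / ((α+1+n)(k+1))` and `(α+n)(n-k) / (β(k+1))`, and
`d_n - b_n = -αβ / ((α+n)(α+1+n))`; the combination collapses to
`(n+1)(α+1+k) - α(n-k) = (k+1)(α+1+n)`. The constant terms cancel in the same way.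
-/

open Finset

/-- Pochhammer symbol `(a)_k = a (a+1) ⋯ (a+k-1)`. -/
noncomputable def poch (a : ℝ) (k : ℕ) : ℝ := ∏ i ∈ Finset.range k, (a + (i : ℝ))

/-- The Hendriksen–van Rossum polynomial `P_n(z; α, β)`. -/
noncomputable def HR (α β : ℝ) (n : ℕ) (z : ℝ) : ℝ :=
  (poch β n / poch (α + 1) n) *
    ∑ k ∈ Finset.range (n + 1),
      poch (-(n : ℝ)) k * poch (α + 1) k /
          (poch (1 - β - (n : ℝ)) k * (Nat.factorial k : ℝ)) * z ^ k

/-- `d_m(α,β) = −(m+β)/(m+α+1)`. -/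
noncomputable def dco (α β m : ℝ) : ℝ := -(m + β) / (m + α + 1)

/-- `b_m(α,β) = −m(m+α+β)/((m+α)(m+α+1))`. -/
noncomputable def bco (α β m : ℝ) : ℝ := -(m * (m + α + β)) / ((m + α) * (m + α + 1))

lemma poch_succ_right (a : ℝ) (k : ℕ) : poch a (k + 1) = poch a k * (a + k) := by
  simp [poch, prod_range_succ]

lemma poch_succ_left (a : ℝ) (k : ℕ) : poch a (k + 1) = a * poch (a + 1) k := by
  simp only [poch, prod_range_succ', Nat.cast_add, Nat.cast_one, Nat.cast_zero, add_zero]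
  rw [mul_comm]
  congr 1
  exact prod_congr rfl fun i _ => by ring

lemma poch_mul_add (a : ℝ) (n : ℕ) : poch a n * (a + n) = a * poch (a + 1) n := by
  rw [← poch_succ_right, poch_succ_left]

lemma poch_add_one_eq_div {a : ℝ} (ha : a ≠ 0) (n : ℕ) :
    poch (a + 1) n = poch a n * (a + n) / a := by
  rw [poch_mul_add]; field_simp

lemma poch_eq_div {a : ℝ} {n : ℕ} (h : a + n ≠ 0) : poch a n = a * poch (a + 1) n / (a + n) := by
  rw [← poch_mul_add]; field_simp

lemma poch_neg_natCast_eq_zero {n k : ℕ} (h : n < k) : poch (-(n : ℝ)) k = 0 :=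
  prod_eq_zero (mem_range.mpr h) (by ring)

noncomputable def hrCoeff (α β : ℝ) (n k : ℕ) : ℝ :=
  poch β n / poch (α + 1) n *
    (poch (-(n : ℝ)) k * poch (α + 1) k / (poch (1 - β - (n : ℝ)) k * (k.factorial : ℝ)))

lemma HR_eq_sum (α β : ℝ) (n : ℕ) (z : ℝ) :
    HR α β n z = ∑ k ∈ range (n + 1), hrCoeff α β n k * z ^ k := by
  rw [HR, mul_sum]
  exact sum_congr rfl fun k _ => by rw [hrCoeff]; ring

lemma hrCoeff_eq_zero_of_lt (α β : ℝ) {n k : ℕ} (h : n < k) : hrCoeff α β n k = 0 := by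
  simp [hrCoeff, poch_neg_natCast_eq_zero h]

lemma HR_eq_sum_of_lt (α β : ℝ) {n N : ℕ} (h : n < N) (z : ℝ) :
    HR α β n z = ∑ k ∈ range N, hrCoeff α β n k * z ^ k := by
  rw [HR_eq_sum]
  refine sum_subset (range_subset_range.mpr h) fun k _ hk => ?_
  rw [hrCoeff_eq_zero_of_lt α β (by simpa using hk), zero_mul]

lemma hrCoeff_zero (α β : ℝ) (n : ℕ) : hrCoeff α β n 0 = poch β n / poch (α + 1) n := by
  simp [hrCoeff, poch]

lemma hrCoeff_succ_succ {α β : ℝ} {n : ℕ} (hα : α + 1 + n ≠ 0) (hβ : β + n ≠ 0) (k : ℕ) :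
    hrCoeff α β (n + 1) (k + 1)
      = hrCoeff α β n k * ((n + 1) * (α + 1 + k) / ((α + 1 + n) * (k + 1))) := by
  have hneg : poch (-((n + 1 : ℕ) : ℝ)) (k + 1) = (-n - 1) * poch (-(n : ℝ)) k := by
    rw [poch_succ_left]; push_cast; ring_nf
  have hden : poch (1 - β - ((n + 1 : ℕ) : ℝ)) (k + 1) = (-β - n) * poch (1 - β - n) k := by
    rw [poch_succ_left]; push_cast; ring_nf
  have hβ' : -β - n ≠ 0 := fun h => hβ (by linarith)
  rw [hrCoeff, hrCoeff, hneg, hden, poch_succ_right β, poch_succ_right (α + 1) n,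
    poch_succ_right (α + 1) k, Nat.factorial_succ]
  push_cast
  field_simp
  ring

lemma hrCoeff_shift_succ {α β : ℝ} {n : ℕ} (hα : α ≠ 0) (hβ : β ≠ 0) (hαn : α + n ≠ 0)
    (hβn : β + n ≠ 0) (k : ℕ) :
    hrCoeff (α - 1) (β + 1) n (k + 1)
      = hrCoeff α β n k * ((α + n) * (n - k) / (β * (k + 1))) := by
  have hden : poch (1 - (β + 1) - n) (k + 1) = (-β - n) * poch (1 - β - n) k := by
    rw [poch_succ_left]; ring_nf
  have hβn' : -β - n ≠ 0 := fun h => hβn (by linarith)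
  rw [hrCoeff, hrCoeff, sub_add_cancel, hden, poch_add_one_eq_div hβ, poch_eq_div hαn,
    poch_succ_left α, poch_succ_right (-(n : ℝ)), Nat.factorial_succ]
  push_cast
  field_simp
  ring

lemma dco_sub_bco {α β m : ℝ} (h₀ : α + m ≠ 0) (h₁ : α + 1 + m ≠ 0) :
    dco α β m - bco α β m = -(α * β) / ((α + m) * (α + 1 + m)) := by
  rw [dco, bco, add_comm m α, add_right_comm α m 1]
  field_simp
  ring

lemma hrCoeff_recurrence_zero {α β : ℝ} {n : ℕ} (hα : α ≠ 0) (hβ : β ≠ 0) (hαn : α + n ≠ 0)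
    (hαn₁ : α + 1 + n ≠ 0) :
    hrCoeff α β (n + 1) 0 + (dco α β n - bco α β n) * hrCoeff (α - 1) (β + 1) n 0 = 0 := by
  rw [hrCoeff_zero, hrCoeff_zero, sub_add_cancel, dco_sub_bco hαn hαn₁, poch_succ_right β,
    poch_succ_right (α + 1), poch_eq_div hαn, poch_add_one_eq_div hβ]
  field_simp
  ring

lemma hrCoeff_recurrence_succ {α β : ℝ} {n : ℕ} (hα : α ≠ 0) (hβ : β ≠ 0) (hαn : α + n ≠ 0)
    (hαn₁ : α + 1 + n ≠ 0) (hβn : β + n ≠ 0) (k : ℕ) :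
    hrCoeff α β n k
      = hrCoeff α β (n + 1) (k + 1)
        + (dco α β n - bco α β n) * hrCoeff (α - 1) (β + 1) n (k + 1) := by
  rw [hrCoeff_succ_succ hαn₁ hβn, hrCoeff_shift_succ hα hβ hαn hβn, dco_sub_bco hαn hαn₁]
  field_simp
  ring

theorem stmt6_general (α β : ℝ)
    (hα : ∀ m : ℤ, α ≠ (m : ℝ)) (hβ : ∀ m : ℤ, β ≠ (m : ℝ))
    (n : ℕ) (z : ℝ) :
    z * HR α β n z
      = HR α β (n + 1) z
        + (dco α β (n : ℝ) - bco α β (n : ℝ)) * HR (α - 1) (β + 1) n z := by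
  have hα₀ : α ≠ 0 := by simpa using hα 0
  have hβ₀ : β ≠ 0 := by simpa using hβ 0
  have hαn : α + n ≠ 0 := fun h => hα (-n) (by push_cast; linarith)
  have hαn₁ : α + 1 + n ≠ 0 := fun h => hα (-(n + 1)) (by push_cast; linarith)
  have hβn : β + n ≠ 0 := fun h => hβ (-n) (by push_cast; linarith)
  rw [HR_eq_sum, HR_eq_sum, HR_eq_sum_of_lt (α - 1) (β + 1) (by omega : n < n + 2), mul_sum,
    mul_sum, ← sum_add_distrib, sum_range_succ' _ (n + 1)]
  simp only [pow_zero, mul_one, hrCoeff_recurrence_zero hα₀ hβ₀ hαn hαn₁, add_zero]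
  refine sum_congr rfl fun k _ => ?_
  rw [hrCoeff_recurrence_succ hα₀ hβ₀ hαn hαn₁ hβn k]
  ring

/-- `z · P_n(z; α, β) = P_{n+1}(z; α, β) + (d_n − b_n) · P_n(z; α−1, β+1)`. -/
theorem stmt6 (α β : ℝ)
    (hα : ∀ m : ℤ, α ≠ (m : ℝ)) (hβ : ∀ m : ℤ, β ≠ (m : ℝ))
    (hαβ : ∀ m : ℤ, α + β ≠ (m : ℝ))
    (n : ℕ) (z : ℝ) :
    z * HR α β n z
      = HR α β (n + 1) z
        + (dco α β (n : ℝ) - bco α β (n : ℝ)) * HR (α - 1) (β + 1) n z :=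
  stmt6_general α β hα hβ n z
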